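/- arXiv:1509.02230 — 3 statements merged into one kernel-verified Lean document; each statement's English description precedes it below -/
import Mathlib

section
/- Let X, Y, Z be independent real random variables, with X and Y identically distributed with mean μ and variance σ², and Z having finite second moment. Let X' = ZX + (1−Z)Y. Then Var(X') − σ² = 2 E[Z(Z−1)] σ². -/
/-! Centring at the common mean `m` writes the proposal as `m + Z (X - m) + (1 - Z) (Y - m)`.
The coefficients `(Z, 1 - Z)` are independent of the independent centred pair, so the two
summands are uncorrelated and each has variance `E[c²] σ²` for its coefficient `c`. Hence
`Var X' = (E[Z²] + E[(1 - Z)²]) σ² = (1 + 2 E[Z (Z - 1)]) σ²`. -/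

open MeasureTheory ProbabilityTheory

namespace ProbabilityTheory

variable {Ω : Type*} [MeasurableSpace Ω] {μ : Measure Ω}

lemma IndepFun.memLp_two_mul {A B : Ω → ℝ} (h : A ⟂ᵢ[μ] B) (hA : MemLp A 2 μ)
    (hB : MemLp B 2 μ) : MemLp (fun ω ↦ A ω * B ω) 2 μ := by
  refine (memLp_two_iff_integrable_sq (f := fun ω ↦ A ω * B ω) (hA.1.mul hB.1)).2 ?_
  have := (h.comp (measurable_id.pow_const 2) (measurable_id.pow_const 2)).integrable_mul
    hA.integrable_sq hB.integrable_sq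
  simpa only [mul_pow, Pi.mul_def, Function.comp_apply, id] using this

lemma covariance_mul_mul_eq_zero {S T U V : Ω → ℝ}
    (hcoef : (fun ω ↦ (S ω, T ω)) ⟂ᵢ[μ] fun ω ↦ (U ω, V ω)) (hUV : U ⟂ᵢ[μ] V)
    (hS : AEStronglyMeasurable S μ) (hT : AEStronglyMeasurable T μ)
    (hU : AEStronglyMeasurable U μ) (hV : AEStronglyMeasurable V μ)
    (hU0 : μ[U] = 0) (hV0 : μ[V] = 0) :
    cov[fun ω ↦ S ω * U ω, fun ω ↦ T ω * V ω; μ] = 0 := by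
  have hSU : S ⟂ᵢ[μ] U := hcoef.comp measurable_fst measurable_fst
  have hTV : T ⟂ᵢ[μ] V := hcoef.comp measurable_snd measurable_snd
  have hfactor :
      ∫ ω, S ω * U ω * (T ω * V ω) ∂μ = μ[fun ω ↦ S ω * T ω] * μ[fun ω ↦ U ω * V ω] :=
    calc ∫ ω, S ω * U ω * (T ω * V ω) ∂μ = ∫ ω, S ω * T ω * (U ω * V ω) ∂μ := by
          congr with ω; ring
      _ = _ := (hcoef.comp (measurable_fst.mul measurable_snd)
          (measurable_fst.mul measurable_snd)).integral_fun_mul_eq_mul_integral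
            (hS.mul hT) (hU.mul hV)
  rw [covariance, hSU.integral_fun_mul_eq_mul_integral hS hU,
    hTV.integral_fun_mul_eq_mul_integral hT hV, hU0, hV0]
  simp only [mul_zero, sub_zero]
  rw [hfactor, hUV.integral_fun_mul_eq_mul_integral hU hV, hU0, zero_mul, mul_zero]

variable [IsProbabilityMeasure μ]

lemma IndepFun.variance_mul {A B : Ω → ℝ} (h : A ⟂ᵢ[μ] B) (hA : MemLp A 2 μ)
    (hB : MemLp B 2 μ) :
    Var[fun ω ↦ A ω * B ω; μ] = (∫ ω, A ω ^ 2 ∂μ) * (∫ ω, B ω ^ 2 ∂μ) - (μ[A] * μ[B]) ^ 2 := by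
  rw [variance_eq_sub (h.memLp_two_mul hA hB), h.integral_fun_mul_eq_mul_integral hA.1 hB.1]
  simp_rw [Pi.pow_apply, mul_pow]
  rw [h.integral_fun_comp_mul_comp (f := fun x ↦ x ^ 2) (g := fun x ↦ x ^ 2) hA.aemeasurable
    hB.aemeasurable (by fun_prop) (by fun_prop)]

lemma variance_mul_add_mul {S T U V : Ω → ℝ}
    (hcoef : (fun ω ↦ (S ω, T ω)) ⟂ᵢ[μ] fun ω ↦ (U ω, V ω)) (hUV : U ⟂ᵢ[μ] V)
    (hS : MemLp S 2 μ) (hT : MemLp T 2 μ) (hU : MemLp U 2 μ) (hV : MemLp V 2 μ)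
    (hU0 : μ[U] = 0) (hV0 : μ[V] = 0) :
    Var[fun ω ↦ S ω * U ω + T ω * V ω; μ]
      = (∫ ω, S ω ^ 2 ∂μ) * (∫ ω, U ω ^ 2 ∂μ) + (∫ ω, T ω ^ 2 ∂μ) * (∫ ω, V ω ^ 2 ∂μ) := by
  have hSU : S ⟂ᵢ[μ] U := hcoef.comp measurable_fst measurable_fst
  have hTV : T ⟂ᵢ[μ] V := hcoef.comp measurable_snd measurable_snd
  rw [variance_fun_add (hSU.memLp_two_mul hS hU) (hTV.memLp_two_mul hT hV),
    hSU.variance_mul hS hU, hTV.variance_mul hT hV,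
    covariance_mul_mul_eq_zero hcoef hUV hS.1 hT.1 hU.1 hV.1 hU0 hV0, hU0, hV0]
  ring

lemma integral_sq_add_integral_one_sub_sq {Z : Ω → ℝ} (hZ : MemLp Z 2 μ) :
    ∫ ω, Z ω ^ 2 ∂μ + ∫ ω, (1 - Z ω) ^ 2 ∂μ = 1 + 2 * ∫ ω, Z ω * (Z ω - 1) ∂μ := by
  have hZ' : MemLp (fun ω ↦ 1 - Z ω) 2 μ := (memLp_const 1).sub hZ
  have hZZ : Integrable (fun ω ↦ Z ω * (Z ω - 1)) μ :=
    hZ.integrable_mul (hZ.sub (memLp_const 1))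
  calc ∫ ω, Z ω ^ 2 ∂μ + ∫ ω, (1 - Z ω) ^ 2 ∂μ = ∫ ω, (1 + 2 * (Z ω * (Z ω - 1))) ∂μ := by
        rw [← integral_add hZ.integrable_sq hZ'.integrable_sq]
        congr with ω
        ring
    _ = 1 + 2 * ∫ ω, Z ω * (Z ω - 1) ∂μ := by
        rw [integral_add (integrable_const 1) (hZZ.const_mul 2), integral_const_mul]
        simp

lemma iIndepFun.variance_mul_add_one_sub_mul {X Y Z : Ω → ℝ} (h : iIndepFun ![X, Y, Z] μ)
    (hX : MemLp X 2 μ) (hY : MemLp Y 2 μ) (hZ : MemLp Z 2 μ) (hmean : μ[X] = μ[Y]) :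
    Var[fun ω ↦ Z ω * X ω + (1 - Z ω) * Y ω; μ]
      = (∫ ω, Z ω ^ 2 ∂μ) * Var[X; μ] + (∫ ω, (1 - Z ω) ^ 2 ∂μ) * Var[Y; μ] := by
  set m := μ[X]
  have hmeas : ∀ i, AEMeasurable (![X, Y, Z] i) μ := by
    intro i; fin_cases i
    exacts [hX.aemeasurable, hY.aemeasurable, hZ.aemeasurable]
  have hXYZ : (fun ω ↦ (X ω, Y ω)) ⟂ᵢ[μ] Z := by
    simpa using h.indepFun_prodMk₀ hmeas 0 1 2 (by decide) (by decide)
  have hcoef : (fun ω ↦ (Z ω, 1 - Z ω)) ⟂ᵢ[μ] fun ω ↦ (X ω - m, Y ω - m) :=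
    (hXYZ.comp (φ := fun p : ℝ × ℝ ↦ (p.1 - m, p.2 - m)) (ψ := fun z ↦ (z, 1 - z))
      (by fun_prop) (by fun_prop)).symm
  have hXY : X ⟂ᵢ[μ] Y := by simpa using h.indepFun (show (0 : Fin 3) ≠ 1 by decide)
  have hcentred : (fun ω ↦ X ω - m) ⟂ᵢ[μ] fun ω ↦ Y ω - m :=
    hXY.comp (measurable_sub_const m) (measurable_sub_const m)
  have hU : MemLp (fun ω ↦ X ω - m) 2 μ := hX.sub (memLp_const m)
  have hV : MemLp (fun ω ↦ Y ω - m) 2 μ := hY.sub (memLp_const m)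
  have hT : MemLp (fun ω ↦ 1 - Z ω) 2 μ := (memLp_const 1).sub hZ
  have hshift : (fun ω ↦ Z ω * X ω + (1 - Z ω) * Y ω)
      = fun ω ↦ (Z ω * (X ω - m) + (1 - Z ω) * (Y ω - m)) + m := by
    ext ω; ring
  rw [hshift, variance_add_const (X := fun ω ↦ Z ω * (X ω - m) + (1 - Z ω) * (Y ω - m))
      ((hZ.1.mul hU.1).add (hT.1.mul hV.1)),
    variance_mul_add_mul hcoef hcentred hZ hT hU hV
      (by rw [integral_sub (hX.integrable one_le_two) (integrable_const m)]; simp [m])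
      (by rw [integral_sub (hY.integrable one_le_two) (integrable_const m), ← hmean]; simp),
    variance_eq_integral hX.aemeasurable, variance_eq_integral hY.aemeasurable, ← hmean]

end ProbabilityTheory

theorem stretch_proposal_variance_general {Ω : Type*} [MeasurableSpace Ω] (μ : Measure Ω)
    [IsProbabilityMeasure μ] (X Y Z : Ω → ℝ) (m σ2 : ℝ)
    (hindep : iIndepFun ![X, Y, Z] μ)
    (hX2 : MemLp X 2 μ) (hY2 : MemLp Y 2 μ) (hZ2 : MemLp Z 2 μ)
    (hXm : ∫ ω, X ω ∂μ = m) (hYm : ∫ ω, Y ω ∂μ = m)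
    (hXv : variance X μ = σ2) (hYv : variance Y μ = σ2) :
    variance (fun ω => Z ω * X ω + (1 - Z ω) * Y ω) μ - σ2
      = 2 * (∫ ω, Z ω * (Z ω - 1) ∂μ) * σ2 := by
  rw [hindep.variance_mul_add_one_sub_mul hX2 hY2 hZ2 (hXm.trans hYm.symm), hXv, hYv]
  linear_combination σ2 * integral_sq_add_integral_one_sub_sq hZ2

/-- If `X' = ZX + (1−Z)Y` with `X, Y, Z` independent, `X` and `Y` i.i.d. with mean `m` and
variance `σ²`, and `Z` with finite second moment, then `Var(X') − σ² = 2 E[Z(Z−1)] σ²`. -/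
theorem stretch_proposal_variance {Ω : Type*} [MeasurableSpace Ω] (μ : Measure Ω)
    [IsProbabilityMeasure μ] (X Y Z : Ω → ℝ) (m σ2 : ℝ)
    (hindep : iIndepFun ![X, Y, Z] μ)
    (hX2 : MemLp X 2 μ) (hY2 : MemLp Y 2 μ) (hZ2 : MemLp Z 2 μ)
    (hid : Measure.map X μ = Measure.map Y μ)
    (hXm : ∫ ω, X ω ∂μ = m) (hYm : ∫ ω, Y ω ∂μ = m)
    (hXv : variance X μ = σ2) (hYv : variance Y μ = σ2) :
    variance (fun ω => Z ω * X ω + (1 - Z ω) * Y ω) μ - σ2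
      = 2 * (∫ ω, Z ω * (Z ω - 1) ∂μ) * σ2 :=
  stretch_proposal_variance_general μ X Y Z m σ2 hindep hX2 hY2 hZ2 hXm hYm hXv hYv
end

section
/- Let (X_i), (Y_i) be sequences of i.i.d. real random variables, mutually independent, with common mean μ and common variance σ² (finite second moments). Fix z > 0 and define h_n = (n−1) log z − (1/2)Σ_{i=1}^n (z X_i + (1−z) Y_i)² + (1/2)Σ_{i=1}^n X_i². Then h_n/n converges almost surely to f_σ(z) = log z − σ² z(z−1) (and the limit does not depend on μ). -/
/-!
For `n ≥ 1`, `h_n / n` is `(1 - 1/n) log z` minus half the empirical mean of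
`(z X_i + (1 - z) Y_i)²` plus half the empirical mean of `X_i²`. The pairs `(X_i, Y_i)` are i.i.d.,
so the strong law sends these empirical means to `E[(z X + (1 - z) Y)²]` and `E[X²]`. Each second
moment is a variance plus the square of a mean; both means are `m`, so the `m²` terms cancel, and by
independence `Var(z X + (1 - z) Y) = (z² + (1 - z)²) σ²`, which leaves `-σ² z (z - 1)`.
-/

open MeasureTheory ProbabilityTheory Filter Topology

namespace ProbabilityTheory

variable {Ω : Type*} [MeasurableSpace Ω] {μ : Measure Ω}

theorem integral_sq_eq_variance_add_sq [IsProbabilityMeasure μ] {X : Ω → ℝ} (hX : MemLp X 2 μ) :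
    ∫ ω, X ω ^ 2 ∂μ = Var[X; μ] + (∫ ω, X ω ∂μ) ^ 2 := by
  rw [variance_eq_sub hX]
  simp only [Pi.pow_apply]
  ring

theorem IndepFun.variance_const_mul_add_const_mul {X Y : Ω → ℝ} (hX : MemLp X 2 μ)
    (hY : MemLp Y 2 μ) (h : X ⟂ᵢ[μ] Y) (a b : ℝ) :
    Var[fun ω => a * X ω + b * Y ω; μ] = a ^ 2 * Var[X; μ] + b ^ 2 * Var[Y; μ] := by
  have hab : (fun ω => a * X ω) ⟂ᵢ[μ] (fun ω => b * Y ω) :=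
    h.comp (measurable_const_mul a) (measurable_const_mul b)
  rw [← variance_const_mul, ← variance_const_mul]
  exact hab.variance_add (hX.const_mul a) (hY.const_mul b)

theorem IndepFun.integral_sq_const_mul_add_const_mul [IsProbabilityMeasure μ] {X Y : Ω → ℝ}
    (hX : MemLp X 2 μ) (hY : MemLp Y 2 μ) (h : X ⟂ᵢ[μ] Y) (a b : ℝ) :
    ∫ ω, (a * X ω + b * Y ω) ^ 2 ∂μ
      = a ^ 2 * Var[X; μ] + b ^ 2 * Var[Y; μ] + (a * ∫ ω, X ω ∂μ + b * ∫ ω, Y ω ∂μ) ^ 2 := by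
  have hXa := (hX.integrable one_le_two).const_mul a
  have hYb := (hY.integrable one_le_two).const_mul b
  rw [integral_sq_eq_variance_add_sq (X := fun ω => a * X ω + b * Y ω)
      ((hX.const_mul a).add (hY.const_mul b)),
    h.variance_const_mul_add_const_mul hX hY, integral_add hXa hYb,
    integral_const_mul, integral_const_mul]

/-- The pairs `(X i, Y i)` are i.i.d. as soon as the two sequences are jointly independent and each
is identically distributed. -/
theorem strong_law_ae_real_comp_pair {E : Type*} [MeasurableSpace E] [IsFiniteMeasure μ]
    {X Y : ℕ → Ω → E} (hindep : iIndepFun (fun p : Bool × ℕ => if p.1 then X p.2 else Y p.2) μ)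
    (hXident : ∀ i, IdentDistrib (X i) (X 0) μ μ) (hYident : ∀ i, IdentDistrib (Y i) (Y 0) μ μ)
    {g : E × E → ℝ} (hg : Measurable g) (hint : Integrable (fun ω => g (X 0 ω, Y 0 ω)) μ) :
    ∀ᵐ ω ∂μ, Tendsto (fun n : ℕ => (∑ i ∈ Finset.range n, g (X i ω, Y i ω)) / n) atTop
      (𝓝 (∫ ω, g (X 0 ω, Y 0 ω) ∂μ)) := by
  have hmeas : ∀ p : Bool × ℕ, AEMeasurable (if p.1 then X p.2 else Y p.2) μ := by
    rintro ⟨_ | _, i⟩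
    exacts [(hYident i).aemeasurable_fst, (hXident i).aemeasurable_fst]
  have hXY : ∀ i, X i ⟂ᵢ[μ] Y i := fun i =>
    hindep.indepFun (i := (true, i)) (j := (false, i)) (by simp)
  refine strong_law_ae_real (fun i ω => g (X i ω, Y i ω)) hint (fun i j hij => ?_) fun i =>
    ((hXident i).prodMk (hYident i) (hXY i) (hXY 0)).comp hg
  exact (hindep.indepFun_prodMk_prodMk₀ hmeas (true, i) (false, i) (true, j) (false, j)
    (by simp [hij]) (by simp) (by simp) (by simp [hij])).comp hg hg

end ProbabilityTheory

theorem tendsto_sub_one_mul_sub_half_add_half_div {A B : ℕ → ℝ} {a b : ℝ} (c : ℝ)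
    (hA : Tendsto (fun n : ℕ => A n / n) atTop (𝓝 a))
    (hB : Tendsto (fun n : ℕ => B n / n) atTop (𝓝 b)) :
    Tendsto (fun n : ℕ => (((n : ℝ) - 1) * c - (1 / 2) * A n + (1 / 2) * B n) / n) atTop
      (𝓝 (c - a / 2 + b / 2)) := by
  have hlim := ((tendsto_const_nhds (x := c)).sub
    (tendsto_inv_atTop_nhds_zero_nat.const_mul c)).sub (hA.div_const 2) |>.add (hB.div_const 2)
  rw [mul_zero, sub_zero] at hlim
  refine hlim.congr' ?_
  filter_upwards [eventually_ne_atTop 0] with n hn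
  field_simp

theorem log_acceptance_ratio_lln_general {Ω : Type*} [MeasurableSpace Ω] (μ : Measure Ω)
    [IsProbabilityMeasure μ] (X Y : ℕ → Ω → ℝ) (m σ : ℝ) (z : ℝ)
    (hindep : iIndepFun (m := fun _ => Real.measurableSpace)
      (fun p : Bool × ℕ => if p.1 then X p.2 else Y p.2) μ)
    (hXid : ∀ i, Measure.map (X i) μ = Measure.map (X 0) μ)
    (hYid : ∀ i, Measure.map (Y i) μ = Measure.map (Y 0) μ)
    (hX2 : ∀ i, MemLp (X i) 2 μ) (hY2 : ∀ i, MemLp (Y i) 2 μ)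
    (hXm : ∀ i, ∫ ω, X i ω ∂μ = m) (hYm : ∀ i, ∫ ω, Y i ω ∂μ = m)
    (hXv : ∀ i, variance (X i) μ = σ^2) (hYv : ∀ i, variance (Y i) μ = σ^2) :
    ∀ᵐ ω ∂μ, Tendsto
      (fun n : ℕ =>
        (((n : ℝ) - 1) * Real.log z
          - (1/2) * ∑ i ∈ Finset.range n, (z * X i ω + (1 - z) * Y i ω)^2
          + (1/2) * ∑ i ∈ Finset.range n, (X i ω)^2) / n)
      atTop (nhds (Real.log z - σ^2 * z * (z - 1))) := by
  have hXident : ∀ i, IdentDistrib (X i) (X 0) μ μ := fun i =>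
    ⟨(hX2 i).aemeasurable, (hX2 0).aemeasurable, hXid i⟩
  have hYident : ∀ i, IdentDistrib (Y i) (Y 0) μ μ := fun i =>
    ⟨(hY2 i).aemeasurable, (hY2 0).aemeasurable, hYid i⟩
  have hXY : X 0 ⟂ᵢ[μ] Y 0 := hindep.indepFun (i := (true, 0)) (j := (false, 0)) (by simp)
  have hEproposal := hXY.integral_sq_const_mul_add_const_mul (hX2 0) (hY2 0) z (1 - z)
  have hEcurrent := integral_sq_eq_variance_add_sq (hX2 0)
  filter_upwards [strong_law_ae_real_comp_pair hindep hXident hYident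
      (g := fun p => (z * p.1 + (1 - z) * p.2) ^ 2) (by fun_prop)
      (((hX2 0).const_mul z).add ((hY2 0).const_mul (1 - z))).integrable_sq,
    strong_law_ae_real_comp_pair hindep hXident hYident
      (g := fun p => p.1 ^ 2) (by fun_prop) (hX2 0).integrable_sq] with ω hproposal hcurrent
  convert tendsto_sub_one_mul_sub_half_add_half_div (Real.log z) hproposal hcurrent using 2
  rw [hEproposal, hEcurrent, hXm, hYm, hXv, hYv]
  ring

/-- Law of large numbers for the normalized log acceptance ratio of the AIES stretch move on an
`n`-dimensional standard Gaussian: if `(X_i)`, `(Y_i)` are mutually independent i.i.d. sequences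
with mean `m` and variance `σ²`, then
`h_n/n → f_σ(z) = log z − σ² z(z−1)` almost surely. -/
theorem log_acceptance_ratio_lln {Ω : Type*} [MeasurableSpace Ω] (μ : Measure Ω)
    [IsProbabilityMeasure μ] (X Y : ℕ → Ω → ℝ) (m σ : ℝ) (z : ℝ) (hz : 0 < z)
    (hindep : iIndepFun (m := fun _ => Real.measurableSpace)
      (fun p : Bool × ℕ => if p.1 then X p.2 else Y p.2) μ)
    (hXid : ∀ i, Measure.map (X i) μ = Measure.map (X 0) μ)
    (hYid : ∀ i, Measure.map (Y i) μ = Measure.map (Y 0) μ)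
    (hX2 : ∀ i, MemLp (X i) 2 μ) (hY2 : ∀ i, MemLp (Y i) 2 μ)
    (hXm : ∀ i, ∫ ω, X i ω ∂μ = m) (hYm : ∀ i, ∫ ω, Y i ω ∂μ = m)
    (hXv : ∀ i, variance (X i) μ = σ^2) (hYv : ∀ i, variance (Y i) μ = σ^2) :
    ∀ᵐ ω ∂μ, Tendsto
      (fun n : ℕ =>
        (((n : ℝ) - 1) * Real.log z
          - (1/2) * ∑ i ∈ Finset.range n, (z * X i ω + (1 - z) * Y i ω)^2
          + (1/2) * ∑ i ∈ Finset.range n, (X i ω)^2) / n)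
      atTop (nhds (Real.log z - σ^2 * z * (z - 1))) :=
  log_acceptance_ratio_lln_general μ X Y m σ z hindep hXid hYid hX2 hY2 hXm hYm hXv hYv
end

section
/- Let π be a positive probability density on ℝⁿ, A an invertible n×n real matrix, and b ∈ ℝⁿ. Let π'(q) = π(A^{-1}(q−b))/|det A|. Given points x, y ∈ ℝⁿ, z > 0, set x̃ = z x + (1−z) y, q = A x + b, u = A y + b, q̃ = z q + (1−z) u. Then q̃ = A x̃ + b and z^{n−1} π'(q̃)/π'(q) = z^{n−1} π(x̃)/π(x); i.e., the stretch-move proposal and acceptance probability are invariant under the affine transformation. -/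
open Matrix

theorem smul_add_one_sub_smul_mulVec_add {R m n : Type*} [CommRing R] [Fintype n]
    (A : Matrix m n R) (b : m → R) (z : R) (x y : n → R) :
    z • (A *ᵥ x + b) + (1 - z) • (A *ᵥ y + b) = A *ᵥ (z • x + (1 - z) • y) + b := by
  simp only [mulVec_add, mulVec_smul, smul_add]
  module

/-- The density of `A X + b` when `X` has density `π` and `A` is invertible. -/
noncomputable def affinePushforwardDensity {n : Type*} [Fintype n] [DecidableEq n]
    (π : (n → ℝ) → ℝ) (A : Matrix n n ℝ) (b : n → ℝ) (q : n → ℝ) : ℝ :=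
  π (A⁻¹ *ᵥ (q - b)) / |A.det|

theorem affinePushforwardDensity_mulVec_add {n : Type*} [Fintype n] [DecidableEq n]
    (π : (n → ℝ) → ℝ) {A : Matrix n n ℝ} (hA : IsUnit A.det) (b v : n → ℝ) :
    affinePushforwardDensity π A b (A *ᵥ v + b) = π v / |A.det| := by
  rw [affinePushforwardDensity, add_sub_cancel_right, mulVec_mulVec, nonsing_inv_mul A hA,
    one_mulVec]

theorem stretch_move_affine_invariance_general {n : ℕ}
    (π : (Fin n → ℝ) → ℝ)
    (A : Matrix (Fin n) (Fin n) ℝ) (hA : IsUnit A.det)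
    (b : Fin n → ℝ) (z : ℝ)
    (π' : (Fin n → ℝ) → ℝ)
    (hπ' : π' = fun q => π (A⁻¹.mulVec (q - b)) / |A.det|)
    (x y : Fin n → ℝ) :
    z • (A.mulVec x + b) + (1 - z) • (A.mulVec y + b)
        = A.mulVec (z • x + (1 - z) • y) + b ∧
    z ^ (n - 1) * π' (z • (A.mulVec x + b) + (1 - z) • (A.mulVec y + b))
        / π' (A.mulVec x + b)
      = z ^ (n - 1) * π (z • x + (1 - z) • y) / π x := by
  obtain rfl : π' = affinePushforwardDensity π A b := hπ'
  have hq := smul_add_one_sub_smul_mulVec_add A b z x y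
  refine ⟨hq, ?_⟩
  rw [hq, affinePushforwardDensity_mulVec_add π hA, affinePushforwardDensity_mulVec_add π hA,
    mul_div_assoc, div_div_div_cancel_right₀ (abs_ne_zero.mpr hA.ne_zero), mul_div_assoc]

/-- Affine invariance of the stretch move: with `π'(q) = π(A⁻¹(q−b))/|det A|`,
`x̃ = z x + (1−z) y`, `q = A x + b`, `u = A y + b`, `q̃ = z q + (1−z) u`, we have
`q̃ = A x̃ + b` and `z^{n−1} π'(q̃)/π'(q) = z^{n−1} π(x̃)/π(x)`. -/
theorem stretch_move_affine_invariance {n : ℕ}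
    (π : (Fin n → ℝ) → ℝ) (hπ : ∀ x, 0 < π x)
    (A : Matrix (Fin n) (Fin n) ℝ) (hA : IsUnit A.det)
    (b : Fin n → ℝ) (z : ℝ) (hz : 0 < z)
    (π' : (Fin n → ℝ) → ℝ)
    (hπ' : π' = fun q => π (A⁻¹.mulVec (q - b)) / |A.det|)
    (x y : Fin n → ℝ) :
    z • (A.mulVec x + b) + (1 - z) • (A.mulVec y + b)
        = A.mulVec (z • x + (1 - z) • y) + b ∧
    z ^ (n - 1) * π' (z • (A.mulVec x + b) + (1 - z) • (A.mulVec y + b))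
        / π' (A.mulVec x + b)
      = z ^ (n - 1) * π (z • x + (1 - z) • y) / π x :=
  stretch_move_affine_invariance_general π A hA b z π' hπ' x y
end
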